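/- (Proposition 1(i), sufficient descent.) Assume L ≥ L_f̃ and let V ∈ S be such that every column of G(V) is nonzero, and let V⁺ := Proj_S(G(V)) be the algorithmic update. Then Φ_ρ(V) − Φ_ρ(V⁺) ≥ ((L − L_f̃)/2)·‖V⁺ − V‖_F². -/

import Mathlib

open Matrix

noncomputable section

/-- Squared Frobenius norm `‖A‖_F²`. -/
def frobSq {a b : ℕ} (A : Matrix (Fin a) (Fin b) ℝ) : ℝ := ∑ i, ∑ j, A i j ^ 2

/-- Frobenius norm `‖A‖_F`. -/
def frobNorm {a b : ℕ} (A : Matrix (Fin a) (Fin b) ℝ) : ℝ := Real.sqrt (frobSq A)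

/-- Trace (Frobenius) inner product `⟨A,B⟩ = tr(AᵀB)`. -/
def frobInner {a b : ℕ} (A B : Matrix (Fin a) (Fin b) ℝ) : ℝ := ∑ i, ∑ j, A i j * B i j

/-- Squared spectral norm: `sup {‖Vx‖₂² : ‖x‖₂ = 1}`. -/
def specSq {a b : ℕ} (V : Matrix (Fin a) (Fin b) ℝ) : ℝ :=
  sSup {c | ∃ x : Fin b → ℝ, (∑ j, x j ^ 2) = 1 ∧ c = ∑ i, (∑ j, V i j * x j) ^ 2}

/-- Spectral norm (largest singular value). -/
def specNorm {a b : ℕ} (V : Matrix (Fin a) (Fin b) ℝ) : ℝ := Real.sqrt (specSq V)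

/-- Membership in `S`: all columns have unit Euclidean norm. -/
def unitCols {a b : ℕ} (V : Matrix (Fin a) (Fin b) ℝ) : Prop :=
  ∀ j, ∑ i, V i j ^ 2 = 1

/-- Column-wise normalization to unit Euclidean norm (projection onto `S`). -/
def normalizeCols {a b : ℕ} (G : Matrix (Fin a) (Fin b) ℝ) : Matrix (Fin a) (Fin b) ℝ :=
  Matrix.of fun i j => G i j / Real.sqrt (∑ i', G i' j ^ 2)

/-- `u` is a unit eigenvector of `VᵀV` associated with its largest eigenvalue `lam`
(the Rayleigh-quotient bound states that `lam` is the largest eigenvalue). -/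
def isTopEigen {a b : ℕ} (V : Matrix (Fin a) (Fin b) ℝ) (lam : ℝ) (u : Fin b → ℝ) : Prop :=
  (∑ j, u j ^ 2) = 1 ∧ (Vᵀ * V) *ᵥ u = lam • u ∧
    ∀ x : Fin b → ℝ, x ⬝ᵥ ((Vᵀ * V) *ᵥ x) ≤ lam * (x ⬝ᵥ x)

/-- `Γ(V) = −2 V u uᵀ` where `u = u₁(V)`. -/
def GammaOf {a b : ℕ} (V : Matrix (Fin a) (Fin b) ℝ) (u : Fin b → ℝ) :
    Matrix (Fin a) (Fin b) ℝ := (-2 : ℝ) • (V * vecMulVec u u)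

/-- The update direction `G(V) = (2ρ+L)⁻¹ (L V − ∇f̃(V) − ρ Γ(V))`. -/
def Gmap {a b : ℕ} (gradf : Matrix (Fin a) (Fin b) ℝ → Matrix (Fin a) (Fin b) ℝ)
    (ρ L : ℝ) (V : Matrix (Fin a) (Fin b) ℝ) (u : Fin b → ℝ) : Matrix (Fin a) (Fin b) ℝ :=
  (2 * ρ + L)⁻¹ • (L • V - gradf V - ρ • GammaOf V u)

/-- Penalized objective `Φ_ρ(V) = f̃(V) + ρ(‖V‖_F² − ‖V‖²)`. -/
def Phi {a b : ℕ} (f : Matrix (Fin a) (Fin b) ℝ → ℝ) (ρ : ℝ)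
    (V : Matrix (Fin a) (Fin b) ℝ) : ℝ := f V + ρ * (frobSq V - specSq V)

/-- Stationarity residual `𝒢_ρ(V,Γ) = inf_t ‖∇f̃(V) + 2ρV + ρΓ + V·Diag(t)‖_F`. -/
def Gres {a b : ℕ} (gradf : Matrix (Fin a) (Fin b) ℝ → Matrix (Fin a) (Fin b) ℝ) (ρ : ℝ)
    (V Γ : Matrix (Fin a) (Fin b) ℝ) : ℝ :=
  ⨅ t : Fin b → ℝ, frobNorm (gradf V + (2 * ρ) • V + ρ • Γ + V * Matrix.diagonal t)

/-- The all-ones matrix `E` scaled by `1/√m`. -/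
def Escaled (a b : ℕ) : Matrix (Fin a) (Fin b) ℝ :=
  (Real.sqrt a)⁻¹ • Matrix.of fun _ _ => (1 : ℝ)

attribute [local instance] Matrix.frobeniusNormedAddCommGroup Matrix.frobeniusNormedSpace

/-- The continuous linear functional `W ↦ ⟨A, W⟩` (Frobenius pairing); used to state that
`∇f̃` is the gradient of `f̃` with respect to the trace inner product. -/
def frobCLM {a b : ℕ} (A : Matrix (Fin a) (Fin b) ℝ) :
    Matrix (Fin a) (Fin b) ℝ →L[ℝ] ℝ :=
  LinearMap.toContinuousLinearMap
    { toFun := fun W => frobInner A W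
      map_add' := fun W W' => by
        simp [frobInner, Matrix.add_apply, mul_add, Finset.sum_add_distrib]
      map_smul' := fun c W => by
        simp [frobInner, Matrix.smul_apply, smul_eq_mul, Finset.mul_sum, mul_left_comm] }

/-!
Write `D = V⁺ - V`. The descent lemma gives `f̃(V⁺) ≤ f̃(V) + ⟨∇f̃(V), D⟩ + (L_f̃/2)‖D‖_F²`, and
since `-Γ(V) = 2 V u₁ u₁ᵀ` is a subgradient of the convex function `‖·‖²` at `V`,
`‖V⁺‖² ≥ ‖V‖² - ⟨Γ(V), D⟩`. As `V` and `V⁺` both lie on the product of spheres `S`,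
`‖V⁺‖_F = ‖V‖_F` and `⟨V, D⟩ = -‖D‖_F²/2`. Finally, by column-wise Cauchy–Schwarz, `V⁺`
maximizes `⟨G(V), ·⟩` over `S`, so `⟨L V - ∇f̃(V) - ρ Γ(V), D⟩ ≥ 0`. Adding these up gives the
claim.
-/

section Descent

variable {E : Type*} [NormedAddCommGroup E] [NormedSpace ℝ E]

theorem image_le_add_fderiv_add_half_sq {f : E → ℝ} {f' : E → E →L[ℝ] ℝ} {K : ℝ}
    (hf : ∀ x, HasFDerivAt f (f' x) x)
    (hf' : ∀ x y, f' y (y - x) - f' x (y - x) ≤ K * ‖y - x‖ ^ 2) (x y : E) :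
    f y ≤ f x + f' x (y - x) + K / 2 * ‖y - x‖ ^ 2 := by
  set d := y - x
  let g : ℝ → ℝ := fun t => f (x + t • d) - t * f' x d - K / 2 * ‖d‖ ^ 2 * t ^ 2
  have hg : ∀ t, HasDerivAt g (f' (x + t • d) d - f' x d - K * ‖d‖ ^ 2 * t) t := by
    intro t
    have hline : HasDerivAt (fun t : ℝ => x + t • d) d t := by
      simpa using ((hasDerivAt_id t).smul_const d).const_add x
    have hquad : HasDerivAt (fun t : ℝ => K / 2 * ‖d‖ ^ 2 * t ^ 2) (K * ‖d‖ ^ 2 * t) t := by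
      refine ((hasDerivAt_pow 2 t).const_mul (K / 2 * ‖d‖ ^ 2)).congr_deriv ?_
      norm_num
      ring
    exact (((hf _).comp_hasDerivAt t hline).sub (hasDerivAt_mul_const (f' x d))).sub hquad
  have hg' : ∀ t ∈ interior (Set.Icc (0 : ℝ) 1),
      f' (x + t • d) d - f' x d - K * ‖d‖ ^ 2 * t ≤ 0 := by
    intro t ht
    rw [interior_Icc] at ht
    have h := hf' x (x + t • d)
    rw [add_sub_cancel_left, map_smul, map_smul, smul_eq_mul, smul_eq_mul, norm_smul,
      Real.norm_of_nonneg ht.1.le] at h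
    have : t * (f' (x + t • d) d - f' x d - K * ‖d‖ ^ 2 * t) ≤ t * 0 := by
      linear_combination h
    exact le_of_mul_le_mul_left this ht.1
  have hanti := antitoneOn_of_hasDerivWithinAt_nonpos (convex_Icc 0 1)
    (fun t _ => (hg t).continuousAt.continuousWithinAt) (fun t _ => (hg t).hasDerivWithinAt) hg'
  have h10 : g 1 ≤ g 0 := hanti (by simp) (by simp) zero_le_one
  have hxd : x + d = y := add_sub_cancel x y
  simp only [g, one_smul, zero_smul, add_zero, hxd] at h10
  linarith

end Descent

section Frobenius

variable {a b : ℕ}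

theorem frobSq_eq_norm_sq (A : Matrix (Fin a) (Fin b) ℝ) : frobSq A = ‖A‖ ^ 2 := by
  rw [frobenius_norm_def, ← Real.sqrt_eq_rpow, Real.sq_sqrt (by positivity)]
  simp [frobSq, sq_abs]

theorem frobSq_nonneg (A : Matrix (Fin a) (Fin b) ℝ) : 0 ≤ frobSq A := by
  rw [frobSq_eq_norm_sq]
  positivity

theorem frobNorm_mul_self (A : Matrix (Fin a) (Fin b) ℝ) : frobNorm A * frobNorm A = frobSq A :=
  Real.mul_self_sqrt (frobSq_nonneg A)

theorem frobInner_sub_left (A B C : Matrix (Fin a) (Fin b) ℝ) :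
    frobInner (A - B) C = frobInner A C - frobInner B C := by
  simp [frobInner, sub_mul, Finset.sum_sub_distrib]

theorem frobInner_sub_right (A B C : Matrix (Fin a) (Fin b) ℝ) :
    frobInner A (B - C) = frobInner A B - frobInner A C := by
  simp [frobInner, mul_sub, Finset.sum_sub_distrib]

theorem frobInner_smul_left (c : ℝ) (A B : Matrix (Fin a) (Fin b) ℝ) :
    frobInner (c • A) B = c * frobInner A B := by
  simp [frobInner, Finset.mul_sum, mul_assoc]

theorem frobSq_add (A B : Matrix (Fin a) (Fin b) ℝ) :
    frobSq (A + B) = frobSq A + 2 * frobInner A B + frobSq B := by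
  simp only [frobSq, frobInner, Matrix.add_apply, add_sq, Finset.sum_add_distrib, Finset.mul_sum,
    mul_assoc]

theorem frobInner_le_frobNorm_mul_frobNorm (A B : Matrix (Fin a) (Fin b) ℝ) :
    frobInner A B ≤ frobNorm A * frobNorm B := by
  simp only [frobInner, frobNorm, frobSq, ← Finset.sum_product']
  exact Real.sum_mul_le_sqrt_mul_sqrt _ _ _

end Frobenius

section Spectral

variable {a b : ℕ}

theorem sum_sq_sum_mul_eq_dotProduct (V : Matrix (Fin a) (Fin b) ℝ) (x : Fin b → ℝ) :
    ∑ i, (∑ j, V i j * x j) ^ 2 = (V *ᵥ x) ⬝ᵥ (V *ᵥ x) := by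
  simp only [dotProduct, mulVec, sq]

theorem dotProduct_mulVec_le_specSq (V : Matrix (Fin a) (Fin b) ℝ) {x : Fin b → ℝ}
    (hx : ∑ j, x j ^ 2 = 1) : (V *ᵥ x) ⬝ᵥ (V *ᵥ x) ≤ specSq V := by
  refine le_csSup ⟨frobSq V, ?_⟩ ⟨x, hx, (sum_sq_sum_mul_eq_dotProduct V x).symm⟩
  rintro c ⟨y, hy, rfl⟩
  refine Finset.sum_le_sum fun i _ => ?_
  calc (∑ j, V i j * y j) ^ 2 ≤ (∑ j, V i j ^ 2) * ∑ j, y j ^ 2 :=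
        Finset.sum_mul_sq_le_sq_mul_sq _ _ _
    _ = ∑ j, V i j ^ 2 := by rw [hy, mul_one]

theorem mulVec_dotProduct_mulVec (V : Matrix (Fin a) (Fin b) ℝ) (x : Fin b → ℝ) :
    (V *ᵥ x) ⬝ᵥ (V *ᵥ x) = x ⬝ᵥ ((Vᵀ * V) *ᵥ x) := by
  rw [← mulVec_mulVec, dotProduct_mulVec x, vecMul_transpose]

theorem dotProduct_self_eq_one_of_sum_sq {x : Fin b → ℝ} (hx : ∑ j, x j ^ 2 = 1) :
    x ⬝ᵥ x = 1 := by
  simpa only [dotProduct, sq] using hx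

theorem isTopEigen.mulVec_dotProduct_mulVec_eq {V : Matrix (Fin a) (Fin b) ℝ} {lam : ℝ}
    {u : Fin b → ℝ} (h : isTopEigen V lam u) : (V *ᵥ u) ⬝ᵥ (V *ᵥ u) = lam := by
  rw [mulVec_dotProduct_mulVec, h.2.1, dotProduct_smul, dotProduct_self_eq_one_of_sum_sq h.1,
    smul_eq_mul, mul_one]

theorem specSq_eq_of_isTopEigen {V : Matrix (Fin a) (Fin b) ℝ} {lam : ℝ} {u : Fin b → ℝ}
    (h : isTopEigen V lam u) : specSq V = lam := by
  refine le_antisymm (csSup_le ⟨_, u, h.1, rfl⟩ ?_) ?_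
  · rintro c ⟨x, hx, rfl⟩
    rw [sum_sq_sum_mul_eq_dotProduct, mulVec_dotProduct_mulVec]
    simpa [dotProduct_self_eq_one_of_sum_sq hx] using h.2.2 x
  · exact h.mulVec_dotProduct_mulVec_eq ▸ dotProduct_mulVec_le_specSq V h.1

theorem frobInner_GammaOf (V D : Matrix (Fin a) (Fin b) ℝ) (u : Fin b → ℝ) :
    frobInner (GammaOf V u) D = -2 * (V *ᵥ u) ⬝ᵥ (D *ᵥ u) := by
  simp only [frobInner, GammaOf, dotProduct, mulVec, Matrix.smul_apply, Matrix.mul_apply,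
    vecMulVec_apply, smul_eq_mul, Finset.mul_sum, Finset.sum_mul]
  refine Finset.sum_congr rfl fun i _ => ?_
  exact Finset.sum_congr rfl fun k _ => Finset.sum_congr rfl fun j _ => by ring

theorem specSq_sub_frobInner_GammaOf_le {V : Matrix (Fin a) (Fin b) ℝ} {lam : ℝ}
    {u : Fin b → ℝ} (h : isTopEigen V lam u) (W : Matrix (Fin a) (Fin b) ℝ) :
    specSq V - frobInner (GammaOf V u) (W - V) ≤ specSq W := by
  have hW := dotProduct_mulVec_le_specSq W h.1
  have hV : specSq V = (V *ᵥ u) ⬝ᵥ (V *ᵥ u) := by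
    rw [specSq_eq_of_isTopEigen h, h.mulVec_dotProduct_mulVec_eq]
  have hsplit : W *ᵥ u = V *ᵥ u + (W - V) *ᵥ u := by
    rw [sub_mulVec, add_sub_cancel]
  rw [hsplit] at hW
  rw [frobInner_GammaOf, hV]
  have := dotProduct_self_star_nonneg ((W - V) *ᵥ u)
  simp only [dotProduct_add, add_dotProduct, star_trivial] at hW this
  rw [dotProduct_comm ((W - V) *ᵥ u) (V *ᵥ u)] at hW
  linarith

end Spectral

section Projection

variable {a b : ℕ}

theorem sum_col_sq_pos {G : Matrix (Fin a) (Fin b) ℝ} {j : Fin b} (h : ∃ i, G i j ≠ 0) :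
    0 < ∑ i, G i j ^ 2 := by
  obtain ⟨i, hi⟩ := h
  exact Finset.sum_pos' (fun _ _ => sq_nonneg _) ⟨i, Finset.mem_univ i, sq_pos_of_ne_zero hi⟩

theorem unitCols_normalizeCols {G : Matrix (Fin a) (Fin b) ℝ} (h : ∀ j, ∃ i, G i j ≠ 0) :
    unitCols (normalizeCols G) := by
  intro j
  have hpos := sum_col_sq_pos (h j)
  simp only [normalizeCols, Matrix.of_apply, div_pow, Real.sq_sqrt hpos.le, ← Finset.sum_div]
  exact div_self hpos.ne'

theorem frobInner_le_frobInner_normalizeCols (G : Matrix (Fin a) (Fin b) ℝ)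
    {V : Matrix (Fin a) (Fin b) ℝ} (hV : unitCols V) :
    frobInner G V ≤ frobInner G (normalizeCols G) := by
  rw [frobInner, frobInner, Finset.sum_comm]
  conv_rhs => rw [Finset.sum_comm]
  refine Finset.sum_le_sum fun j _ => ?_
  have hcol : ∑ i, G i j * normalizeCols G i j = √(∑ i, G i j ^ 2) := by
    simp only [normalizeCols, Matrix.of_apply, mul_div, ← sq, ← Finset.sum_div, Real.div_sqrt]
  calc ∑ i, G i j * V i j ≤ √(∑ i, G i j ^ 2) * √(∑ i, V i j ^ 2) :=
        Real.sum_mul_le_sqrt_mul_sqrt _ _ _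
    _ = ∑ i, G i j * normalizeCols G i j := by rw [hV j, Real.sqrt_one, mul_one, hcol]

theorem frobSq_of_unitCols {X : Matrix (Fin a) (Fin b) ℝ} (hX : unitCols X) : frobSq X = b := by
  rw [frobSq, Finset.sum_comm]
  simp [hX _]

theorem frobInner_sub_of_unitCols {V W : Matrix (Fin a) (Fin b) ℝ} (hV : unitCols V)
    (hW : unitCols W) : frobInner V (W - V) = -frobSq (W - V) / 2 := by
  have h := frobSq_add V (W - V)
  rw [add_sub_cancel, frobSq_of_unitCols hV, frobSq_of_unitCols hW] at h
  linarith

end Projection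

theorem frobInner_Gmap {a b : ℕ} (gradf : Matrix (Fin a) (Fin b) ℝ → Matrix (Fin a) (Fin b) ℝ)
    (ρ L : ℝ) (V D : Matrix (Fin a) (Fin b) ℝ) (u : Fin b → ℝ) :
    frobInner (Gmap gradf ρ L V u) D = (2 * ρ + L)⁻¹ *
      (L * frobInner V D - frobInner (gradf V) D - ρ * frobInner (GammaOf V u) D) := by
  rw [Gmap, frobInner_smul_left, frobInner_sub_left, frobInner_sub_left, frobInner_smul_left,
    frobInner_smul_left]

theorem le_add_frobInner_add_half_frobSq {a b : ℕ} {f : Matrix (Fin a) (Fin b) ℝ → ℝ}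
    {gradf : Matrix (Fin a) (Fin b) ℝ → Matrix (Fin a) (Fin b) ℝ} {K : ℝ}
    (hderiv : ∀ W, HasFDerivAt f (frobCLM (gradf W)) W)
    (hlip : ∀ W W', frobNorm (gradf W - gradf W') ≤ K * frobNorm (W - W'))
    (V W : Matrix (Fin a) (Fin b) ℝ) :
    f W ≤ f V + frobInner (gradf V) (W - V) + K / 2 * frobSq (W - V) := by
  have hmono : ∀ V W, frobInner (gradf W - gradf V) (W - V) ≤ K * frobSq (W - V) := fun V W =>
    calc frobInner (gradf W - gradf V) (W - V)
        ≤ frobNorm (gradf W - gradf V) * frobNorm (W - V) := frobInner_le_frobNorm_mul_frobNorm _ _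
      _ ≤ K * frobNorm (W - V) * frobNorm (W - V) := by
        gcongr
        · exact Real.sqrt_nonneg _
        · exact hlip W V
      _ = K * frobSq (W - V) := by rw [mul_assoc, frobNorm_mul_self]
  have := image_le_add_fderiv_add_half_sq hderiv (K := K) (fun V W => by
    rw [← frobSq_eq_norm_sq]
    exact (frobInner_sub_left _ _ _).symm.trans_le (hmono V W)) V W
  rwa [← frobSq_eq_norm_sq] at this

/-- Proposition 1(i), sufficient descent. If `L ≥ L_f̃`, `V ∈ S`, every column
of `G(V)` is nonzero and `V⁺ = Proj_S(G(V))`, then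
`Φ_ρ(V) − Φ_ρ(V⁺) ≥ ((L − L_f̃)/2)·‖V⁺ − V‖_F²`. -/
theorem dcra_sufficient_descent (m p : ℕ)
    (ftilde : Matrix (Fin m) (Fin p) ℝ → ℝ)
    (gradf : Matrix (Fin m) (Fin p) ℝ → Matrix (Fin m) (Fin p) ℝ)
    (Lf : ℝ) (hLf : 0 < Lf)
    (hderiv : ∀ W : Matrix (Fin m) (Fin p) ℝ, HasFDerivAt ftilde (frobCLM (gradf W)) W)
    (hlip : ∀ W W' : Matrix (Fin m) (Fin p) ℝ,
      frobNorm (gradf W - gradf W') ≤ Lf * frobNorm (W - W'))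
    (ρ L : ℝ) (hρ : 0 < ρ) (hL : Lf ≤ L)
    (V : Matrix (Fin m) (Fin p) ℝ) (hV : unitCols V)
    (u : Fin p → ℝ) (lam : ℝ) (htop : isTopEigen V lam u)
    (hcol : ∀ j, ∃ i, Gmap gradf ρ L V u i j ≠ 0)
    (Vp : Matrix (Fin m) (Fin p) ℝ) (hVp : Vp = normalizeCols (Gmap gradf ρ L V u)) :
    Phi ftilde ρ V - Phi ftilde ρ Vp ≥ ((L - Lf) / 2) * frobSq (Vp - V) := by
  have hVp_mem : unitCols Vp := hVp ▸ unitCols_normalizeCols hcol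
  have hdesc := le_add_frobInner_add_half_frobSq hderiv hlip V Vp
  have hspec := specSq_sub_frobInner_GammaOf_le htop Vp
  have hstep : 0 ≤ L * frobInner V (Vp - V) - frobInner (gradf V) (Vp - V)
      - ρ * frobInner (GammaOf V u) (Vp - V) := by
    have h := frobInner_le_frobInner_normalizeCols (Gmap gradf ρ L V u) hV
    rw [← hVp, ← sub_nonneg, ← frobInner_sub_right, frobInner_Gmap] at h
    exact nonneg_of_mul_nonneg_right h (inv_pos.2 (by linarith))
  rw [frobInner_sub_of_unitCols hV hVp_mem] at hstep
  have hspecρ := mul_le_mul_of_nonneg_left hspec hρ.le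
  rw [Phi, Phi, frobSq_of_unitCols hV, frobSq_of_unitCols hVp_mem]
  linarith

end
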